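/- arXiv:2505.02069 — 3 statements merged into one kernel-verified Lean document; each statement's English description precedes it below -/
import Mathlib

section
/- For any distinct real numbers z' and z'', the mean-value slope ∫₀¹ μ'(z' + v(z''−z')) dv is bounded below by μ'(z')·(1−exp(−|z'−z''|))/|z'−z''| and above by μ'(z')·(exp(|z'−z''|)−1)/|z'−z''|. -/
noncomputable def sigmoid : ℝ → ℝ := fun x => (1 + Real.exp (-x))⁻¹

/-!
`μ' = μ (1 - μ)` and `μ'' = μ' (1 - 2μ)` with `0 < μ < 1`, so `|μ''| ≤ μ'`: this is the
self-concordance of the logistic function. Hence `log μ'` is `1`-Lipschitz, so on the segment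
`z' + v (z'' - z')` the value of `μ'` lies between `μ'(z') e^{-v|z' - z''|}` and
`μ'(z') e^{v|z' - z''|}`; integrating these exponentials over `v ∈ [0, 1]` gives the bounds.
-/

section

open Real

theorem le_mul_exp_abs_sub_of_abs_hasDerivAt_le {f f' : ℝ → ℝ} (hf : ∀ x, HasDerivAt f (f' x) x)
    (hpos : ∀ x, 0 < f x) (hf' : ∀ x, |f' x| ≤ f x) (x y : ℝ) :
    f x ≤ f y * exp |x - y| := by
  have hlog : ∀ z, HasDerivAt (fun z => log (f z)) (f' z / f z) z :=
    fun z => (hf z).log (hpos z).ne'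
  have hlip := convex_univ.norm_image_sub_le_of_norm_hasDerivWithin_le
    (fun z _ => (hlog z).hasDerivWithinAt) (C := 1)
    (fun z _ => by simpa [abs_div, abs_of_pos (hpos z), div_le_one (hpos z)] using hf' z)
    (Set.mem_univ y) (Set.mem_univ x)
  simp only [Real.norm_eq_abs, one_mul] at hlip
  rw [← log_le_log_iff (hpos x) (mul_pos (hpos y) (exp_pos _)),
    log_mul (hpos y).ne' (exp_pos _).ne', log_exp]
  linarith [le_abs_self (log (f x) - log (f y))]

theorem integral_exp_mul_zero_one {c : ℝ} (hc : c ≠ 0) :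
    ∫ v in (0 : ℝ)..1, exp (c * v) = (exp c - 1) / c := by
  rw [intervalIntegral.integral_comp_mul_left (fun v => exp v) hc, integral_exp]
  simp [div_eq_inv_mul]

theorem integral_segment_bounds_of_le_mul_exp_abs_sub {f : ℝ → ℝ} (hcont : Continuous f)
    (hf : ∀ x y, f x ≤ f y * exp |x - y|) {a b : ℝ} (hab : a ≠ b) :
    f a * (1 - exp (-|a - b|)) / |a - b| ≤ ∫ v in (0:ℝ)..1, f (a + v * (b - a)) ∧
    ∫ v in (0:ℝ)..1, f (a + v * (b - a)) ≤ f a * (exp |a - b| - 1) / |a - b| := by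
  set d := |a - b|
  have hd : d ≠ 0 := abs_ne_zero.mpr (sub_ne_zero.mpr hab)
  have hdist : ∀ v ∈ Set.Icc (0:ℝ) 1, |a - (a + v * (b - a))| = d * v := fun v hv => by
    rw [show a - (a + v * (b - a)) = v * (a - b) by ring, abs_mul, abs_of_nonneg hv.1, mul_comm]
  have hint : IntervalIntegrable (fun v => f (a + v * (b - a))) MeasureTheory.volume 0 1 :=
    (hcont.comp (by fun_prop)).intervalIntegrable 0 1
  have hexp : ∀ c, IntervalIntegrable (fun v => f a * exp (c * v)) MeasureTheory.volume 0 1 :=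
    fun c => (by fun_prop : Continuous _).intervalIntegrable 0 1
  constructor
  · have hlow : ∀ v ∈ Set.Icc (0:ℝ) 1, f a * exp (-d * v) ≤ f (a + v * (b - a)) := fun v hv => by
      have := hf a (a + v * (b - a))
      rw [hdist v hv] at this
      rwa [neg_mul, exp_neg, ← div_eq_mul_inv, div_le_iff₀ (exp_pos _)]
    calc f a * (1 - exp (-d)) / d = ∫ v in (0:ℝ)..1, f a * exp (-d * v) := by
          rw [intervalIntegral.integral_const_mul,
            integral_exp_mul_zero_one (neg_ne_zero.mpr hd)]
          field_simp
          ring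
      _ ≤ _ := intervalIntegral.integral_mono_on zero_le_one (hexp _) hint hlow
  · have hup : ∀ v ∈ Set.Icc (0:ℝ) 1, f (a + v * (b - a)) ≤ f a * exp (d * v) := fun v hv => by
      have := hf (a + v * (b - a)) a
      rwa [abs_sub_comm, hdist v hv] at this
    calc _ ≤ ∫ v in (0:ℝ)..1, f a * exp (d * v) :=
          intervalIntegral.integral_mono_on zero_le_one hint (hexp _) hup
      _ = f a * (exp d - 1) / d := by
          rw [intervalIntegral.integral_const_mul, integral_exp_mul_zero_one hd, mul_div_assoc]

end

-- `sigmoid` is definitionally Mathlib's `Real.sigmoid`.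
theorem deriv_sigmoid : deriv sigmoid = fun x => Real.sigmoid x * (1 - Real.sigmoid x) :=
  Real.deriv_sigmoid

theorem deriv_sigmoid_pos (x : ℝ) : 0 < deriv sigmoid x := by
  rw [deriv_sigmoid]
  exact mul_pos (Real.sigmoid_pos x) (sub_pos.mpr (Real.sigmoid_lt_one x))

theorem hasDerivAt_deriv_sigmoid (x : ℝ) :
    HasDerivAt (deriv sigmoid)
      (Real.sigmoid x * (1 - Real.sigmoid x) * (1 - 2 * Real.sigmoid x)) x := by
  rw [deriv_sigmoid]
  exact ((Real.hasDerivAt_sigmoid x).mul ((Real.hasDerivAt_sigmoid x).const_sub 1)).congr_deriv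
    (by ring)

theorem abs_deriv_deriv_sigmoid_le (x : ℝ) :
    |Real.sigmoid x * (1 - Real.sigmoid x) * (1 - 2 * Real.sigmoid x)| ≤ deriv sigmoid x := by
  have h0 := Real.sigmoid_pos x
  have h1 := Real.sigmoid_lt_one x
  rw [deriv_sigmoid, abs_mul, abs_of_pos (by nlinarith)]
  exact mul_le_of_le_one_right (by nlinarith) (abs_le.mpr ⟨by linarith, by linarith⟩)

theorem sigmoid_self_concordant (z' z'' : ℝ) (h : z' ≠ z'') :
    deriv sigmoid z' * (1 - Real.exp (-|z' - z''|)) / |z' - z''| ≤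
      (∫ v in (0:ℝ)..1, deriv sigmoid (z' + v * (z'' - z'))) ∧
    (∫ v in (0:ℝ)..1, deriv sigmoid (z' + v * (z'' - z'))) ≤
      deriv sigmoid z' * (Real.exp |z' - z''| - 1) / |z' - z''| := by
  have hcont : Continuous (deriv sigmoid) :=
    continuous_iff_continuousAt.mpr fun x => (hasDerivAt_deriv_sigmoid x).continuousAt
  exact integral_segment_bounds_of_le_mul_exp_abs_sub hcont
    (le_mul_exp_abs_sub_of_abs_hasDerivAt_le hasDerivAt_deriv_sigmoid deriv_sigmoid_pos
      abs_deriv_deriv_sigmoid_le) h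
end

section
/- For any real numbers z' and z'', the mean-value slope ∫₀¹ μ'(z' + v(z''−z')) dv is at least μ'(z')/(1+|z'−z''|) and at least μ''(z'')/(1+|z'−z''|), i.e., at least max{μ'(z'), μ'(z'')}/(1+|z'−z''|). -/
/-! By the fundamental theorem of calculus the integral is the slope `(μ b - μ a) / (b - a)`.
For `a < b`, the odds identity `μ x / (1 - μ x) = exp x` turns `μ b - μ a` into a quantity that
dominates `max (μ' a) (μ' b) * (1 - exp (-(b - a)))`, and `1 - exp (-d) ≥ d / (1 + d)` because
`exp d ≥ 1 + d`. -/

theorem intervalIntegral.integral_comp_segment_eq_slope {E : Type*} [NormedAddCommGroup E]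
    [NormedSpace ℝ E] [CompleteSpace E] {f f' : ℝ → E} (hf : ∀ x, HasDerivAt f (f' x) x)
    (hf' : Continuous f') {a b : ℝ} (hab : a ≠ b) :
    ∫ v in (0:ℝ)..1, f' (a + v * (b - a)) = slope f a b := by
  have hderiv (v : ℝ) :
      HasDerivAt (fun v => f (a + v * (b - a))) ((b - a) • f' (a + v * (b - a))) v :=
    (hf _).scomp v (((hasDerivAt_id v).mul_const (b - a)).const_add a |>.congr_deriv (one_mul _))
  rw [slope_def_module, eq_inv_smul_iff₀ (sub_ne_zero.2 hab.symm),
    ← intervalIntegral.integral_smul,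
    intervalIntegral.integral_eq_sub_of_hasDerivAt (fun v _ => hderiv v)
      ((continuous_const.smul (hf'.comp (by fun_prop))).intervalIntegrable _ _)]
  simp

theorem Real.sigmoid_mul_one_sub_sigmoid_mul_exp (a b : ℝ) :
    Real.sigmoid b * (1 - Real.sigmoid a) * Real.exp (-(b - a)) =
      Real.sigmoid a * (1 - Real.sigmoid b) := by
  have hodds (x : ℝ) : Real.sigmoid x * Real.exp (-x) = 1 - Real.sigmoid x := by
    rw [Real.sigmoid_mul_rexp_neg, Real.sigmoid_neg]
  rw [← hodds a, ← hodds b, neg_sub, Real.exp_sub, Real.exp_neg, Real.exp_neg]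
  field_simp

theorem Real.deriv_sigmoid_mul_one_sub_exp_le {a b : ℝ} (hab : a ≤ b) :
    deriv Real.sigmoid a * (1 - Real.exp (-(b - a))) ≤ Real.sigmoid b - Real.sigmoid a := by
  have hodds := Real.sigmoid_mul_one_sub_sigmoid_mul_exp a b
  have hmono := Real.sigmoid_le hab
  have hscaled :
      Real.sigmoid b * (Real.sigmoid a * (1 - Real.sigmoid a) * (1 - Real.exp (-(b - a)))) =
        Real.sigmoid a * (Real.sigmoid b - Real.sigmoid a) := by
    linear_combination (-Real.sigmoid a) * hodds
  rw [Real.deriv_sigmoid]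
  refine le_of_mul_le_mul_left ?_ (Real.sigmoid_pos b)
  rw [hscaled]
  exact mul_le_mul_of_nonneg_right hmono (sub_nonneg.2 hmono)

theorem Real.deriv_sigmoid_mul_one_sub_exp_le' {a b : ℝ} (hab : a ≤ b) :
    deriv Real.sigmoid b * (1 - Real.exp (-(b - a))) ≤ Real.sigmoid b - Real.sigmoid a := by
  have h := Real.deriv_sigmoid_mul_one_sub_exp_le (neg_le_neg hab)
  simp only [Real.deriv_sigmoid, Real.sigmoid_neg, neg_sub_neg] at h ⊢
  linarith

theorem div_one_add_le_one_sub_exp_neg {x : ℝ} (hx : -1 < x) :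
    x / (1 + x) ≤ 1 - Real.exp (-x) := by
  have hexp : Real.exp (-x) ≤ (1 + x)⁻¹ := by
    rw [Real.exp_neg]
    exact inv_anti₀ (by linarith) (by linarith [Real.add_one_le_exp x])
  have hx1 : 1 + x ≠ 0 := by linarith
  calc x / (1 + x) = 1 - (1 + x)⁻¹ := by field_simp; ring
    _ ≤ 1 - Real.exp (-x) := by linarith

theorem Real.deriv_sigmoid_nonneg (x : ℝ) : 0 ≤ deriv Real.sigmoid x := by
  rw [Real.deriv_sigmoid]
  exact mul_nonneg (Real.sigmoid_nonneg x) (sub_nonneg.2 (Real.sigmoid_le_one x))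

theorem Real.max_deriv_sigmoid_div_le_slope {a b : ℝ} (hab : a ≠ b) :
    max (deriv Real.sigmoid a) (deriv Real.sigmoid b) / (1 + |b - a|) ≤
      slope Real.sigmoid a b := by
  wlog hlt : a < b generalizing a b
  · have h := this hab.symm (lt_of_le_of_ne (not_lt.1 hlt) hab.symm)
    rwa [max_comm, abs_sub_comm, slope_comm] at h
  have hd : 0 < b - a := sub_pos.2 hlt
  have hmax : 0 ≤ max (deriv Real.sigmoid a) (deriv Real.sigmoid b) :=
    le_max_of_le_left (Real.deriv_sigmoid_nonneg a)
  rw [abs_of_pos hd, slope_def_field]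
  calc max (deriv Real.sigmoid a) (deriv Real.sigmoid b) / (1 + (b - a))
      = max (deriv Real.sigmoid a) (deriv Real.sigmoid b) * ((b - a) / (1 + (b - a))) /
          (b - a) := by
        field_simp
    _ ≤ max (deriv Real.sigmoid a) (deriv Real.sigmoid b) * (1 - Real.exp (-(b - a))) /
          (b - a) := by
        gcongr
        exact div_one_add_le_one_sub_exp_neg (by linarith)
    _ ≤ (Real.sigmoid b - Real.sigmoid a) / (b - a) := by
        gcongr
        rw [max_mul_of_nonneg _ _ (sub_nonneg.2 (Real.exp_le_one_iff.2 (by linarith)))]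
        exact max_le (Real.deriv_sigmoid_mul_one_sub_exp_le hlt.le)
          (Real.deriv_sigmoid_mul_one_sub_exp_le' hlt.le)

theorem sigmoid_eq_real_sigmoid : sigmoid = Real.sigmoid := rfl

theorem sigmoid_slope_lower_bound (z' z'' : ℝ) :
    deriv sigmoid z' / (1 + |z' - z''|) ≤
      (∫ v in (0:ℝ)..1, deriv sigmoid (z' + v * (z'' - z'))) ∧
    deriv sigmoid z'' / (1 + |z' - z''|) ≤
      (∫ v in (0:ℝ)..1, deriv sigmoid (z' + v * (z'' - z'))) := by
  rw [sigmoid_eq_real_sigmoid]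
  rcases eq_or_ne z' z'' with rfl | hne
  · simp
  have hcont : Continuous (deriv Real.sigmoid) := by
    rw [Real.deriv_sigmoid]
    fun_prop
  rw [intervalIntegral.integral_comp_segment_eq_slope
    (fun x => (differentiable_sigmoid x).hasDerivAt) hcont hne]
  have hmax := Real.max_deriv_sigmoid_div_le_slope hne
  rw [abs_sub_comm] at hmax
  exact ⟨le_trans (by gcongr; exact le_max_left _ _) hmax,
    le_trans (by gcongr; exact le_max_right _ _) hmax⟩
end

section
/- Let λ > 0 and x₁,…,x_T ∈ ℝ^d, and define Z_t = λI + Σ_{i=1}^t x_i x_iᵀ. Then Σ_{t=1}^T min{1, ‖x_t‖²_{Z_{t-1}⁻¹}} ≤ 2·log(det Z_T / det(λI)) (elliptical potential lemma). -/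
/-!
Adding the rank-one term `x xᵀ` to a positive definite `Z` multiplies its determinant by
`1 + ‖x‖²_{Z⁻¹}` (matrix determinant lemma), so `∑ log (1 + ‖x_t‖²_{Z_t⁻¹})` telescopes to
`log (det Z_T / det Z_0)`. Each summand dominates half of `min 1 ‖x_t‖²_{Z_t⁻¹}`, because
`log (1 + u) ≥ u / (1 + u) ≥ min 1 u / 2` for `u ≥ 0`.
-/

open Matrix Finset

theorem Real.min_one_le_two_mul_log_one_add {u : ℝ} (hu : 0 ≤ u) :
    min 1 u ≤ 2 * Real.log (1 + u) := by
  have hlog : u / (1 + u) ≤ Real.log (1 + u) := by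
    have h := Real.one_sub_inv_le_log_of_pos (by linarith : 0 < 1 + u)
    rwa [show 1 - (1 + u)⁻¹ = u / (1 + u) by field_simp; ring] at h
  have hmin : min 1 u ≤ 2 * (u / (1 + u)) := by
    rw [mul_div_assoc', min_le_iff]
    rcases le_total u 1 with hu1 | hu1
    · right; rw [le_div_iff₀ (by linarith)]; nlinarith
    · left; rw [le_div_iff₀ (by linarith)]; linarith
  linarith

namespace Matrix

variable {n : Type*} [Fintype n] [DecidableEq n]

theorem det_add_vecMulVec {α : Type*} [CommRing α] {A : Matrix n n α} (hA : IsUnit A.det)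
    (u v : n → α) : (A + vecMulVec u v).det = A.det * (1 + v ⬝ᵥ A⁻¹ *ᵥ u) := by
  rw [vecMulVec_eq Unit, det_add_replicateCol_mul_replicateRow hA, det_unique (n := Unit),
    Matrix.mul_assoc, ← replicateCol_mulVec, Matrix.add_apply, one_apply_eq,
    replicateRow_mul_replicateCol_apply]

omit [DecidableEq n] in
theorem PosDef.add_vecMulVec_self {A : Matrix n n ℝ} (hA : A.PosDef) (v : n → ℝ) :
    (A + vecMulVec v v).PosDef := by
  simpa using hA.add_posSemidef (posSemidef_vecMulVec_self_star v)

theorem PosDef.dotProduct_inv_mulVec_nonneg {A : Matrix n n ℝ} (hA : A.PosDef) (v : n → ℝ) :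
    0 ≤ v ⬝ᵥ A⁻¹ *ᵥ v := by
  simpa using hA.inv.posSemidef.dotProduct_mulVec_nonneg v

theorem PosDef.log_det_add_vecMulVec_self {A : Matrix n n ℝ} (hA : A.PosDef) (v : n → ℝ) :
    Real.log (A + vecMulVec v v).det = Real.log A.det + Real.log (1 + v ⬝ᵥ A⁻¹ *ᵥ v) := by
  have hq := hA.dotProduct_inv_mulVec_nonneg v
  rw [det_add_vecMulVec hA.det_pos.ne'.isUnit, Real.log_mul hA.det_pos.ne' (by positivity)]

theorem sum_min_one_le_two_mul_log_det_div {Z : ℕ → Matrix n n ℝ} {x : ℕ → n → ℝ}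
    (hZ0 : (Z 0).PosDef) (hZ : ∀ t, Z (t + 1) = Z t + vecMulVec (x t) (x t)) (T : ℕ) :
    ∑ t ∈ range T, min 1 (x t ⬝ᵥ (Z t)⁻¹ *ᵥ x t) ≤ 2 * Real.log ((Z T).det / (Z 0).det) := by
  have hpd : ∀ t, (Z t).PosDef := fun t ↦
    Nat.rec hZ0 (fun t ih ↦ hZ t ▸ ih.add_vecMulVec_self (x t)) t
  have hstep : ∀ t, Real.log (1 + x t ⬝ᵥ (Z t)⁻¹ *ᵥ x t) =
      Real.log (Z (t + 1)).det - Real.log (Z t).det := fun t ↦ by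
    rw [hZ, (hpd t).log_det_add_vecMulVec_self]
    ring
  calc ∑ t ∈ range T, min 1 (x t ⬝ᵥ (Z t)⁻¹ *ᵥ x t)
      ≤ ∑ t ∈ range T, 2 * Real.log (1 + x t ⬝ᵥ (Z t)⁻¹ *ᵥ x t) :=
        sum_le_sum fun t _ ↦
          Real.min_one_le_two_mul_log_one_add ((hpd t).dotProduct_inv_mulVec_nonneg (x t))
    _ = 2 * (Real.log (Z T).det - Real.log (Z 0).det) := by
        simp_rw [hstep]
        rw [← mul_sum, sum_range_sub (fun t ↦ Real.log (Z t).det)]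
    _ = 2 * Real.log ((Z T).det / (Z 0).det) := by
        rw [Real.log_div (hpd T).det_pos.ne' hZ0.det_pos.ne']

end Matrix

theorem elliptical_potential {d T : ℕ} (lam : ℝ) (hlam : 0 < lam)
    (x : ℕ → Fin d → ℝ) (Z : ℕ → Matrix (Fin d) (Fin d) ℝ)
    (hZ : ∀ t, Z t = lam • (1 : Matrix (Fin d) (Fin d) ℝ) +
      ∑ i ∈ Finset.range t, vecMulVec (x i) (x i)) :
    ∑ t ∈ Finset.range T, min 1 (x t ⬝ᵥ (Z t)⁻¹ *ᵥ x t) ≤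
      2 * Real.log ((Z T).det / (lam • (1 : Matrix (Fin d) (Fin d) ℝ)).det) := by
  have hZ0 : Z 0 = lam • 1 := by simp [hZ 0]
  have hsucc : ∀ t, Z (t + 1) = Z t + vecMulVec (x t) (x t) := fun t ↦ by
    rw [hZ, hZ, sum_range_succ, add_assoc]
  rw [← hZ0]
  exact sum_min_one_le_two_mul_log_det_div (hZ0 ▸ PosDef.one.smul hlam) hsucc T
end
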